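/- Let 1 ≤ k < n be integers, 0 < s ≤ 1 and C₀ > 0. Let μ be a Borel probability measure on ℝ^{(k+1)(n−k)} whose support is contained in the set of admissible codes, and suppose μ satisfies the Frostman condition μ(B(x,r)) ≤ C₀ · r^s for every x and every r > 0 (balls in the sup metric). Then there is a constant C = C(n,k,C₀) > 0 such that for every 0 < δ ≤ 1/2, the double integral ∬ L^n(P(x)_δ ∩ P(y)_δ ∩ S) dμ(x) dμ(y) ≤ C · δ^{n−k+s} · log(1/δ). -/

import Mathlib

/-!
Over the simplex, the `δ`-neighbourhood of `P(x)` lies within `(k + 1) δ` of the graph of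
`t ↦ a + ∑ tᵢ bⁱ`, a sheared box of volume `≈ δ^{n-k}`. If the point is also `δ`-close to `P(y)`,
then one coordinate of the affine map `t ↦ (a - a') + ∑ tᵢ (bⁱ - b'ⁱ)` is `O(δ)` there; since that
coordinate is `≥ |x - y| / 2` at a vertex of the simplex, `t` ranges over a slab of width
`O(δ / |x - y|)`. Hence the intersection has volume `≲ δ^{n-k} min(1, δ / |x - y|)`, and the
Frostman condition bounds `∫ min(1, δ / |x - y|) dμ(y)` by a sum over the dyadic scales
`|x - y| ≈ 2ʲ δ`, `j ≲ log(1/δ)`, each contributing `≲ δ^s`.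
-/

open scoped ENNReal
open MeasureTheory

/-- For a code `x = (a, b¹, …, bᵏ)`, the `k`-dimensional affine subspace
`P(x) = {(t, a + t₁b¹ + ⋯ + t_k bᵏ) : t ∈ ℝᵏ}` of `ℝⁿ ≅ ℝᵏ × ℝ^{n-k}` in graph form. -/
def affGraph (n k : ℕ) (x : (Fin (n - k) → ℝ) × (Fin k → Fin (n - k) → ℝ)) :
    Set ((Fin k → ℝ) × (Fin (n - k) → ℝ)) :=
  {p | ∃ t : Fin k → ℝ, p = (t, x.1 + ∑ i, t i • x.2 i)}

/-- A code `x = (a, b¹, …, bᵏ)` is admissible if `a ∈ [-1/2,1/2]^{n-k}` and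
`a + bⁱ ∈ [-1/2,1/2]^{n-k}` for all `i`. -/
def admissibleCode (n k : ℕ) (x : (Fin (n - k) → ℝ) × (Fin k → Fin (n - k) → ℝ)) : Prop :=
  (∀ j, |x.1 j| ≤ 1 / 2) ∧ ∀ i j, |x.1 j + x.2 i j| ≤ 1 / 2

/-- The set `S = C_simplex × [-1/2,1/2]^{n-k} ⊆ ℝᵏ × ℝ^{n-k}`, where `C_simplex` is the convex
hull of `{0, e₁, …, e_k}` in `ℝᵏ`. -/
def simplexCube (n k : ℕ) : Set ((Fin k → ℝ) × (Fin (n - k) → ℝ)) :=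
  {p | p.1 ∈ convexHull ℝ
        (insert 0 (Set.range fun i : Fin k => (Pi.single i 1 : Fin k → ℝ))) ∧
       ∀ j, |p.2 j| ≤ 1 / 2}

open scoped NNReal
open Metric Set

lemma prod_setOf_fst_mem_snd_sub_mem {X Y : Type*} [MeasurableSpace X] [MeasurableSpace Y]
    [AddGroup Y] [MeasurableAdd Y] [MeasurableSub₂ Y] (μ : Measure X) (ν : Measure Y) [SFinite ν]
    [ν.IsAddRightInvariant] {F : X → Y} (hF : Measurable F) {T : Set X} {B : Set Y}
    (hT : MeasurableSet T) (hB : MeasurableSet B) :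
    μ.prod ν {p | p.1 ∈ T ∧ p.2 - F p.1 ∈ B} = μ T * ν B := by
  have hmeas : MeasurableSet {p : X × Y | p.1 ∈ T ∧ p.2 - F p.1 ∈ B} :=
    (measurable_fst hT).inter ((measurable_snd.sub (hF.comp measurable_fst)) hB)
  rw [Measure.prod_apply hmeas, mul_comm, ← lintegral_indicator_const hT]
  congr 1 with t
  by_cases ht : t ∈ T
  · simp only [ht, true_and, indicator_of_mem, preimage_ofPred_eq, sub_eq_add_neg]
    exact measure_preimage_add_right ν (-F t) B
  · simp [ht]

lemma volume_setOf_fst_mem_norm_sub_le {k m : ℕ} {F : (Fin k → ℝ) → Fin m → ℝ}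
    (hF : Measurable F) {T : Set (Fin k → ℝ)} (hT : MeasurableSet T) {R : ℝ} (hR : 0 ≤ R) :
    volume {p : (Fin k → ℝ) × (Fin m → ℝ) | p.1 ∈ T ∧ ‖p.2 - F p.1‖ ≤ R} =
      volume T * ENNReal.ofReal ((2 * R) ^ m) := by
  simp_rw [← mem_closedBall_zero_iff]
  rw [Measure.volume_eq_prod, prod_setOf_fst_mem_snd_sub_mem _ _ hF hT measurableSet_closedBall,
    Real.volume_pi_closedBall _ hR, Fintype.card_fin]

lemma volume_slab_le {k : ℕ} (c : ℝ) (w : Fin (k + 1) → ℝ) {i₀ : Fin (k + 1)} (hw : w i₀ ≠ 0)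
    (R : ℝ) :
    volume {t : Fin (k + 1) → ℝ | t ∈ Icc 0 1 ∧ |c + ∑ i, t i * w i| ≤ R} ≤
      ENNReal.ofReal (2 * (R / |w i₀|)) := by
  let e := (MeasurableEquiv.piFinSuccAbove (fun _ => ℝ) i₀).trans MeasurableEquiv.prodComm
  have he : MeasurePreserving e volume volume :=
    (volume_preserving_piFinSuccAbove (fun _ => ℝ) i₀).trans Measure.measurePreserving_swap
  let G : (Fin k → ℝ) → ℝ := fun u => -(c + ∑ j, u j * w (i₀.succAbove j)) / w i₀
  have hsub : {t : Fin (k + 1) → ℝ | t ∈ Icc 0 1 ∧ |c + ∑ i, t i * w i| ≤ R} ⊆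
      e ⁻¹' {q | q.1 ∈ Icc 0 1 ∧ q.2 - G q.1 ∈ closedBall 0 (R / |w i₀|)} := by
    rintro t ⟨ht, htR⟩
    have het : e t = (fun j => t (i₀.succAbove j), t i₀) := rfl
    refine ⟨⟨fun j => ht.1 _, fun j => ht.2 _⟩, ?_⟩
    rw [mem_closedBall_zero_iff, Real.norm_eq_abs, le_div_iff₀ (abs_pos.2 hw), ← abs_mul]
    rw [Fin.sum_univ_succAbove _ i₀] at htR
    have hlin : ((e t).2 - G (e t).1) * w i₀ =
        c + (t i₀ * w i₀ + ∑ j, t (i₀.succAbove j) * w (i₀.succAbove j)) := by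
      simp only [het, G]
      field_simp
      ring
    rwa [hlin]
  calc _ ≤ volume (e ⁻¹' {q | q.1 ∈ Icc 0 1 ∧ q.2 - G q.1 ∈ closedBall 0 (R / |w i₀|)}) :=
        measure_mono hsub
    _ = _ := by
      rw [he.measure_preimage_equiv, Measure.volume_eq_prod,
        prod_setOf_fst_mem_snd_sub_mem _ _ (by fun_prop) measurableSet_Icc measurableSet_closedBall,
        Real.volume_closedBall, Real.volume_Icc_pi]
      simp

/- Either some slope `|w i|` is at least `M / (2 (k + 1))` and the set is a thin slab, or all
slopes are smaller and then `|c + ∑ tᵢ wᵢ| > M / 2` on the whole cube. -/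
lemma volume_affine_sublevel_le {k : ℕ} (c : ℝ) (w : Fin k → ℝ) {R M : ℝ} (hR : 0 ≤ R)
    (hM : 0 < M) (hvert : M ≤ |c| ∨ ∃ i, M ≤ |c + w i|) :
    volume {t : Fin k → ℝ | t ∈ Icc 0 1 ∧ |c + ∑ i, t i * w i| ≤ R} ≤
      ENNReal.ofReal (4 * (k + 1) * R / M) := by
  set m := M / (2 * (k + 1)) with hm_def
  have hm : 0 < m := by positivity
  by_cases hsteep : ∃ i, m ≤ |w i|
  · obtain ⟨i, hi⟩ := hsteep
    cases k with
    | zero => exact i.elim0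
    | succ k =>
      have hwi : w i ≠ 0 := abs_pos.1 (hm.trans_le hi)
      refine (volume_slab_le c w hwi R).trans (ENNReal.ofReal_le_ofReal ?_)
      calc 2 * (R / |w i|) ≤ 2 * (R / m) := by gcongr
        _ = _ := by rw [hm_def]; field_simp; ring
  · push Not at hsteep
    have hc : M - m < |c| := by
      rcases hvert with h | ⟨i, h⟩
      · linarith
      · linarith [abs_add_le c (w i), hsteep i]
    have hfar : ∀ t ∈ Icc (0 : Fin k → ℝ) 1, M / 2 < |c + ∑ i, t i * w i| := by
      intro t ht
      have hsum : |∑ i, t i * w i| ≤ k * m := by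
        calc |∑ i, t i * w i| ≤ ∑ i, |t i * w i| := Finset.abs_sum_le_sum_abs _ _
          _ ≤ ∑ _i : Fin k, m := Finset.sum_le_sum fun i _ => by
              rw [abs_mul, abs_of_nonneg (ht.1 i)]
              simpa using mul_le_mul (ht.2 i) (hsteep i).le (abs_nonneg _) zero_le_one
          _ = k * m := by simp
      have hMm : M / 2 = M - (k + 1) * m := by rw [hm_def]; field_simp; ring
      have htri : |c| ≤ |c + ∑ i, t i * w i| + |∑ i, t i * w i| := by
        simpa using abs_sub (c + ∑ i, t i * w i) (∑ i, t i * w i)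
      linarith
    rcases le_or_gt R (M / 2) with hRM | hRM
    · have hempty : {t : Fin k → ℝ | t ∈ Icc 0 1 ∧ |c + ∑ i, t i * w i| ≤ R} = ∅ :=
        eq_empty_of_forall_notMem fun t ⟨ht, htR⟩ => (hfar t ht).not_ge (htR.trans hRM)
      rw [hempty, measure_empty]
      exact zero_le
    · calc _ ≤ volume (Icc (0 : Fin k → ℝ) 1) := measure_mono fun t ht => ht.1
        _ = 1 := by simp [Real.volume_Icc_pi]
        _ ≤ _ := by
          rw [← ENNReal.ofReal_one]
          refine ENNReal.ofReal_le_ofReal ?_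
          rw [le_div_iff₀ hM]
          nlinarith [(k.cast_nonneg : (0 : ℝ) ≤ k)]

def affineGraphMap {ι E : Type*} [Fintype ι] [AddCommGroup E] [Module ℝ E] (x : E × (ι → E))
    (t : ι → ℝ) : E :=
  x.1 + ∑ i, t i • x.2 i

lemma affGraph_eq_range {n k : ℕ} (x : (Fin (n - k) → ℝ) × (Fin k → Fin (n - k) → ℝ)) :
    affGraph n k x = range fun t => (t, affineGraphMap x t) := by
  ext p
  simp [affGraph, affineGraphMap, eq_comm]

lemma affineGraphMap_sub {ι E : Type*} [Fintype ι] [AddCommGroup E] [Module ℝ E]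
    (x y : E × (ι → E)) (t : ι → ℝ) :
    affineGraphMap (x - y) t = affineGraphMap x t - affineGraphMap y t := by
  simp only [affineGraphMap, Prod.fst_sub, Prod.snd_sub, Pi.sub_apply, smul_sub,
    Finset.sum_sub_distrib]
  abel

lemma affineGraphMap_apply {ι : Type*} [Fintype ι] {m : ℕ} (x : (Fin m → ℝ) × (ι → Fin m → ℝ))
    (t : ι → ℝ) (j : Fin m) : affineGraphMap x t j = x.1 j + ∑ i, t i * x.2 i j := by
  simp [affineGraphMap, Finset.sum_apply]

lemma continuous_affineGraphMap {ι E : Type*} [Fintype ι] [SeminormedAddCommGroup E]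
    [NormedSpace ℝ E] (x : E × (ι → E)) : Continuous (affineGraphMap x) := by
  unfold affineGraphMap
  fun_prop

lemma lipschitzWith_affineGraphMap {ι E : Type*} [Fintype ι] [SeminormedAddCommGroup E]
    [NormedSpace ℝ E] (x : E × (ι → E)) (hx : ∀ i, ‖x.2 i‖ ≤ 1) :
    LipschitzWith (Fintype.card ι) (affineGraphMap x) := by
  refine LipschitzWith.of_dist_le_mul fun t t' => ?_
  rw [dist_eq_norm, dist_eq_norm]
  calc ‖affineGraphMap x t - affineGraphMap x t'‖ = ‖∑ i, (t - t') i • x.2 i‖ := by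
        simp [affineGraphMap, sub_smul, Finset.sum_sub_distrib]
    _ ≤ ∑ i, ‖(t - t') i‖ * ‖x.2 i‖ := norm_sum_le_of_le _ fun i _ => (norm_smul _ _).le
    _ ≤ ∑ _i : ι, ‖t - t'‖ := Finset.sum_le_sum fun i _ => by
        simpa using mul_le_mul (norm_le_pi_norm (t - t') i) (hx i) (norm_nonneg _) (norm_nonneg _)
    _ = _ := by simp

lemma LipschitzWith.dist_lt_of_mem_thickening_graph {X Y : Type*} [PseudoMetricSpace X]
    [PseudoMetricSpace Y] {F : X → Y} {K : ℝ≥0} (hF : LipschitzWith K F) {δ : ℝ} {p : X × Y}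
    (hp : p ∈ thickening δ (range fun t => (t, F t))) : dist p.2 (F p.1) < (K + 1) * δ := by
  obtain ⟨_, ⟨t, rfl⟩, hpt⟩ := mem_thickening_iff.1 hp
  rw [Prod.dist_eq, max_lt_iff] at hpt
  calc dist p.2 (F p.1) ≤ dist p.2 (F t) + dist (F t) (F p.1) := dist_triangle _ _ _
    _ ≤ dist p.2 (F t) + K * dist t p.1 := add_le_add_right (hF.dist_le_mul _ _) _
    _ < δ + K * δ := by
        rw [dist_comm t]
        exact add_lt_add_of_lt_of_le hpt.2 (mul_le_mul_of_nonneg_left hpt.1.le K.2)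
    _ = (K + 1) * δ := by ring

lemma admissibleCode.norm_snd_le_one {n k : ℕ} {x : (Fin (n - k) → ℝ) × (Fin k → Fin (n - k) → ℝ)}
    (hx : admissibleCode n k x) (i : Fin k) : ‖x.2 i‖ ≤ 1 := by
  refine (pi_norm_le_iff_of_nonneg zero_le_one).2 fun j => ?_
  rw [Real.norm_eq_abs, abs_le]
  have ha := abs_le.1 (hx.1 j)
  have hab := abs_le.1 (hx.2 i j)
  constructor <;> linarith [ha.1, ha.2, hab.1, hab.2]

lemma admissibleCode.norm_sub_affineGraphMap_lt {n k : ℕ}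
    {x : (Fin (n - k) → ℝ) × (Fin k → Fin (n - k) → ℝ)} (hx : admissibleCode n k x) {δ : ℝ}
    {p : (Fin k → ℝ) × (Fin (n - k) → ℝ)} (hp : p ∈ thickening δ (affGraph n k x)) :
    ‖p.2 - affineGraphMap x p.1‖ < (k + 1) * δ := by
  rw [affGraph_eq_range] at hp
  simpa [dist_eq_norm] using
    (lipschitzWith_affineGraphMap x hx.norm_snd_le_one).dist_lt_of_mem_thickening_graph hp

lemma convexHull_simplex_subset_Icc (k : ℕ) :
    convexHull ℝ (insert 0 (range fun i : Fin k => (Pi.single i 1 : Fin k → ℝ))) ⊆ Icc 0 1 := by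
  refine convexHull_min ?_ (convex_Icc _ _)
  rintro t (rfl | ⟨i, rfl⟩)
  · exact ⟨le_rfl, zero_le_one⟩
  · exact ⟨fun j => by by_cases h : j = i <;> simp [h],
      fun j => by by_cases h : j = i <;> simp [h]⟩

/- `z.1 j` and `z.1 j + z.2 i j` are the `j`-th coordinates of `affineGraphMap z` at the vertices
`0` and `eᵢ` of the simplex. -/
lemma exists_abs_vertex_ge {m k : ℕ} (z : (Fin m → ℝ) × (Fin k → Fin m → ℝ)) (hz : z ≠ 0) :
    ∃ j, ‖z‖ / 2 ≤ |z.1 j| ∨ ∃ i, ‖z‖ / 2 ≤ |z.1 j + z.2 i j| := by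
  by_contra! h
  have hpos : 0 < ‖z‖ / 2 := by have := norm_pos_iff.2 hz; positivity
  have h₁ : ‖z.1‖ < ‖z‖ / 2 := (pi_norm_lt_iff hpos).2 fun j => (h j).1
  have h₂ : ‖z.2‖ < ‖z‖ := (pi_norm_lt_iff (by linarith)).2 fun i => by
    have hi : ‖z.1 + z.2 i‖ < ‖z‖ / 2 := (pi_norm_lt_iff hpos).2 fun j => (h j).2 i
    calc ‖z.2 i‖ = ‖(z.1 + z.2 i) - z.1‖ := by rw [add_sub_cancel_left]
      _ ≤ ‖z.1 + z.2 i‖ + ‖z.1‖ := norm_sub_le _ _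
      _ < ‖z‖ := by linarith
  exact (max_lt (h₁.trans (half_lt_self (by linarith))) h₂).ne (Prod.norm_def z).symm

section Geometry

variable {n k : ℕ} {x y : (Fin (n - k) → ℝ) × (Fin k → Fin (n - k) → ℝ)} {δ : ℝ}

lemma volume_inter_thickenings_le_box (hx : admissibleCode n k x) (hδ : 0 ≤ δ) :
    volume (thickening δ (affGraph n k x) ∩ thickening δ (affGraph n k y) ∩ simplexCube n k) ≤
      ENNReal.ofReal ((2 * ((k + 1) * δ)) ^ (n - k)) := by
  calc _ ≤ volume {p : (Fin k → ℝ) × (Fin (n - k) → ℝ) |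
          p.1 ∈ Icc 0 1 ∧ ‖p.2 - affineGraphMap x p.1‖ ≤ (k + 1) * δ} :=
        measure_mono fun p hp =>
          ⟨convexHull_simplex_subset_Icc k hp.2.1, (hx.norm_sub_affineGraphMap_lt hp.1.1).le⟩
    _ = _ := by
      rw [volume_setOf_fst_mem_norm_sub_le (continuous_affineGraphMap x).measurable
        measurableSet_Icc (by positivity), Real.volume_Icc_pi]
      simp

lemma volume_inter_thickenings_le_slab (hx : admissibleCode n k x) (hy : admissibleCode n k y)
    (hxy : x ≠ y) (hδ : 0 < δ) :
    volume (thickening δ (affGraph n k x) ∩ thickening δ (affGraph n k y) ∩ simplexCube n k) ≤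
      ENNReal.ofReal ((2 * ((k + 1) * δ)) ^ (n - k)) *
        (ENNReal.ofReal (16 * (k + 1) ^ 2) * (ENNReal.ofReal δ / edist x y)) := by
  set R := ((k : ℝ) + 1) * δ with hR
  have hd : 0 < dist x y := dist_pos.2 hxy
  obtain ⟨j, hj⟩ := exists_abs_vertex_ge (x - y) (sub_ne_zero.2 hxy)
  rw [← dist_eq_norm] at hj
  set T := {t : Fin k → ℝ | t ∈ Icc 0 1 ∧ |(x - y).1 j + ∑ i, t i * (x - y).2 i j| ≤ 2 * R}
  have hT : MeasurableSet T := by measurability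
  -- `T` is where the `j`-th coordinates of the graph maps of `x` and `y` are `2R`-close
  have hsub : thickening δ (affGraph n k x) ∩ thickening δ (affGraph n k y) ∩ simplexCube n k ⊆
      {p | p.1 ∈ T ∧ ‖p.2 - affineGraphMap x p.1‖ ≤ R} := by
    rintro p ⟨⟨hpx, hpy⟩, hpS⟩
    have hx' := hx.norm_sub_affineGraphMap_lt hpx
    have hy' := hy.norm_sub_affineGraphMap_lt hpy
    refine ⟨⟨convexHull_simplex_subset_Icc k hpS.1, ?_⟩, hx'.le⟩
    rw [← affineGraphMap_apply, ← Real.norm_eq_abs]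
    calc ‖affineGraphMap (x - y) p.1 j‖ ≤ ‖affineGraphMap (x - y) p.1‖ := norm_le_pi_norm _ j
      _ = ‖(p.2 - affineGraphMap y p.1) - (p.2 - affineGraphMap x p.1)‖ := by
          rw [affineGraphMap_sub]
          congr 1
          abel
      _ ≤ ‖p.2 - affineGraphMap y p.1‖ + ‖p.2 - affineGraphMap x p.1‖ := norm_sub_le _ _
      _ ≤ 2 * R := by linarith
  calc _ ≤ volume T * ENNReal.ofReal ((2 * R) ^ (n - k)) :=
        (measure_mono hsub).trans_eq
          (volume_setOf_fst_mem_norm_sub_le (continuous_affineGraphMap x).measurable hT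
            (by positivity))
    _ ≤ ENNReal.ofReal (4 * (k + 1) * (2 * R) / (dist x y / 2)) *
          ENNReal.ofReal ((2 * R) ^ (n - k)) := by
        gcongr
        exact volume_affine_sublevel_le _ _ (by positivity) (by positivity) hj
    _ = _ := by
        rw [edist_dist, ← ENNReal.ofReal_div_of_pos hd, ← ENNReal.ofReal_mul (by positivity),
          ← ENNReal.ofReal_mul (by positivity), ← ENNReal.ofReal_mul (by positivity)]
        congr 1
        field_simp
        ring

lemma volume_inter_thickenings_le (hx : admissibleCode n k x) (hy : admissibleCode n k y)
    (hδ : 0 < δ) :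
    volume (thickening δ (affGraph n k x) ∩ thickening δ (affGraph n k y) ∩ simplexCube n k) ≤
      ENNReal.ofReal ((2 * ((k + 1) * δ)) ^ (n - k) * (16 * (k + 1) ^ 2)) *
        min 1 (ENNReal.ofReal δ / edist x y) := by
  have hB : 1 ≤ ENNReal.ofReal (16 * (k + 1) ^ 2) :=
    ENNReal.one_le_ofReal.2 (by nlinarith [(k.cast_nonneg : (0 : ℝ) ≤ k)])
  rw [ENNReal.ofReal_mul (by positivity), mul_assoc, mul_min, mul_min, mul_one]
  refine le_min ((volume_inter_thickenings_le_box hx hδ.le).trans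
    (le_mul_of_one_le_right' hB)) ?_
  rcases eq_or_ne x y with rfl | hxy
  · rw [edist_self, ENNReal.div_zero (ENNReal.ofReal_pos.2 hδ).ne',
      ENNReal.mul_top (ENNReal.ofReal_pos.2 (by positivity)).ne',
      ENNReal.mul_top (ENNReal.ofReal_pos.2 (by positivity)).ne']
    exact le_top
  · exact volume_inter_thickenings_le_slab hx hy hxy hδ

end Geometry

section Frostman

variable {α : Type*} [PseudoMetricSpace α]

lemma min_one_div_edist_le_sum_indicator (x y : α) (δ : ℝ) (J : ℕ) :
    min 1 (ENNReal.ofReal δ / edist x y) ≤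
      ∑ j ∈ Finset.range J,
          ENNReal.ofReal ((2 ^ j)⁻¹) * (ball x (2 ^ (j + 1) * δ)).indicator 1 y +
        ENNReal.ofReal ((2 ^ J)⁻¹) := by
  suffices h : ∀ J : ℕ, min 1 (ENNReal.ofReal δ / edist x y) ≤
      ∑ j ∈ Finset.range J,
          ENNReal.ofReal ((2 ^ j)⁻¹) * (ball x (2 ^ (j + 1) * δ)).indicator 1 y +
        min (ENNReal.ofReal ((2 ^ J)⁻¹)) (ENNReal.ofReal δ / edist x y) from
    (h J).trans (add_le_add_right (min_le_left _ _) _)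
  intro J
  induction J with
  | zero => simp
  | succ J ih =>
    rw [Finset.sum_range_succ, add_assoc]
    refine ih.trans (add_le_add_right ?_ _)
    by_cases hy : y ∈ ball x (2 ^ (J + 1) * δ)
    · rw [indicator_of_mem hy, Pi.one_apply, mul_one]
      exact (min_le_left _ _).trans le_self_add
    · rw [indicator_of_notMem hy, mul_zero, zero_add]
      rw [mem_ball, not_lt, dist_comm] at hy
      have hfar : ENNReal.ofReal δ / edist x y ≤ ENNReal.ofReal ((2 ^ (J + 1))⁻¹) := by
        refine ENNReal.div_le_of_le_mul ?_
        rw [edist_dist, ← ENNReal.ofReal_mul (by positivity)]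
        refine ENNReal.ofReal_le_ofReal ?_
        rw [inv_mul_eq_div, le_div_iff₀' (by positivity)]
        exact hy
      exact (min_le_right _ _).trans (le_min hfar le_rfl)

lemma inv_two_pow_mul_rpow_two_pow_succ_mul_le {C₀ s : ℝ} (hC₀ : 0 ≤ C₀) (hs : s ≤ 1) {δ : ℝ}
    (hδ : 0 ≤ δ) (j : ℕ) : (2 ^ j)⁻¹ * (C₀ * (2 ^ (j + 1) * δ) ^ s) ≤ 2 * C₀ * δ ^ s := by
  have hpow : ((2 : ℝ) ^ (j + 1)) ^ s ≤ 2 ^ (j + 1) :=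
    Real.rpow_le_self_of_one_le (one_le_pow₀ one_le_two) hs
  rw [Real.mul_rpow (by positivity) hδ]
  calc (2 ^ j)⁻¹ * (C₀ * ((2 ^ (j + 1)) ^ s * δ ^ s))
      ≤ (2 ^ j)⁻¹ * (C₀ * (2 ^ (j + 1) * δ ^ s)) := by gcongr
    _ = 2 * C₀ * δ ^ s := by rw [pow_succ]; field_simp

variable [MeasurableSpace α] [OpensMeasurableSpace α] {μ : Measure α} [IsProbabilityMeasure μ]

lemma lintegral_min_one_div_edist_le {C₀ s : ℝ} (hC₀ : 0 ≤ C₀) (hs : s ≤ 1)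
    (hfrostman : ∀ x r, 0 < r → μ (ball x r) ≤ ENNReal.ofReal (C₀ * r ^ s)) (x : α) {δ : ℝ}
    (hδ₀ : 0 < δ) (hδ₁ : δ ≤ 1) {J : ℕ} (hJ : 1 ≤ 2 ^ J * δ) :
    ∫⁻ y, min 1 (ENNReal.ofReal δ / edist x y) ∂μ ≤ ENNReal.ofReal ((2 * C₀ * J + 1) * δ ^ s) := by
  have hball (j : ℕ) : ENNReal.ofReal ((2 ^ j)⁻¹) * μ (ball x (2 ^ (j + 1) * δ)) ≤
      ENNReal.ofReal (2 * C₀ * δ ^ s) := by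
    calc _ ≤ ENNReal.ofReal ((2 ^ j)⁻¹) * ENNReal.ofReal (C₀ * (2 ^ (j + 1) * δ) ^ s) := by
          gcongr
          exact hfrostman x _ (by positivity)
      _ ≤ _ := by
          rw [← ENNReal.ofReal_mul (by positivity)]
          exact ENNReal.ofReal_le_ofReal (inv_two_pow_mul_rpow_two_pow_succ_mul_le hC₀ hs hδ₀.le j)
  have htail : ENNReal.ofReal ((2 ^ J)⁻¹) ≤ ENNReal.ofReal (δ ^ s) := by
    refine ENNReal.ofReal_le_ofReal ((inv_le_iff_one_le_mul₀' (by positivity)).2 hJ |>.trans ?_)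
    exact Real.self_le_rpow_of_le_one hδ₀.le hδ₁ hs
  calc _ ≤ ∫⁻ y, (∑ j ∈ Finset.range J,
          ENNReal.ofReal ((2 ^ j)⁻¹) * (ball x (2 ^ (j + 1) * δ)).indicator 1 y +
        ENNReal.ofReal ((2 ^ J)⁻¹)) ∂μ :=
        lintegral_mono fun y => min_one_div_edist_le_sum_indicator x y δ J
    _ = ∑ j ∈ Finset.range J, ENNReal.ofReal ((2 ^ j)⁻¹) * μ (ball x (2 ^ (j + 1) * δ)) +
          ENNReal.ofReal ((2 ^ J)⁻¹) := by
        rw [lintegral_add_right _ measurable_const, lintegral_finsetSum _ fun j _ =>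
          (measurable_one.indicator measurableSet_ball).const_mul _]
        simp [lintegral_const_mul _ (measurable_one.indicator measurableSet_ball),
          lintegral_indicator_one measurableSet_ball]
    _ ≤ ∑ _j ∈ Finset.range J, ENNReal.ofReal (2 * C₀ * δ ^ s) + ENNReal.ofReal (δ ^ s) := by
        gcongr with j
        exact hball j
    _ = _ := by
        rw [Finset.sum_const, Finset.card_range, nsmul_eq_mul, ← ENNReal.ofReal_natCast,
          ← ENNReal.ofReal_mul (by positivity), ← ENNReal.ofReal_add (by positivity)
          (by positivity)]
        ring_nf

end Frostman

lemma exists_one_le_two_pow_mul_and_le_log {δ : ℝ} (hδ₀ : 0 < δ) (hδ₁ : δ ≤ 1 / 2) :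
    ∃ J : ℕ, 1 ≤ 2 ^ J * δ ∧ (J : ℝ) + 1 ≤ 5 * Real.log (1 / δ) := by
  have h2δ : 2 ≤ 1 / δ := by rw [le_div_iff₀ hδ₀]; linarith
  obtain ⟨N, hN, hN'⟩ := exists_nat_pow_near (by linarith : 1 ≤ 1 / δ) one_lt_two
  refine ⟨N + 1, by rw [div_lt_iff₀ hδ₀] at hN'; linarith, ?_⟩
  have hlog2 := Real.log_two_gt_d9
  have hL : Real.log 2 ≤ Real.log (1 / δ) := Real.log_le_log two_pos h2δ
  have hNL : N * Real.log 2 ≤ Real.log (1 / δ) := by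
    rw [← Real.log_pow]
    exact Real.log_le_log (by positivity) hN
  have hmul : ((N + 1 : ℕ) + 1 : ℝ) * Real.log 2 ≤ 5 * Real.log (1 / δ) * Real.log 2 := by
    push_cast
    nlinarith
  exact le_of_mul_le_mul_right hmul (by linarith)

theorem double_integral_volume_inter_thickenings_le_general
    (n k : ℕ) (hkn : k < n) (s : ℝ) (hs1 : s ≤ 1)
    (C₀ : ℝ) (hC₀ : 0 < C₀)
    (μ : Measure ((Fin (n - k) → ℝ) × (Fin k → Fin (n - k) → ℝ)))
    [IsProbabilityMeasure μ]
    (hsupp : μ {x | ¬ admissibleCode n k x} = 0)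
    (hfrostman : ∀ (x : (Fin (n - k) → ℝ) × (Fin k → Fin (n - k) → ℝ)) (r : ℝ),
      0 < r → μ (Metric.ball x r) ≤ ENNReal.ofReal (C₀ * r ^ s)) :
    ∃ C : ℝ, 0 < C ∧
      ∀ δ : ℝ, 0 < δ → δ ≤ 1 / 2 →
        ∫⁻ x, ∫⁻ y,
            volume (Metric.thickening δ (affGraph n k x) ∩
              Metric.thickening δ (affGraph n k y) ∩ simplexCube n k) ∂μ ∂μ ≤
          ENNReal.ofReal (C * δ ^ ((n : ℝ) - k + s) * Real.log (1 / δ)) := by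
  refine ⟨(2 * (k + 1)) ^ (n - k) * (16 * (k + 1) ^ 2) * (5 * (2 * C₀ + 1)), by positivity,
    fun δ hδ₀ hδ₁ => ?_⟩
  obtain ⟨J, hJδ, hJlog⟩ := exists_one_le_two_pow_mul_and_le_log hδ₀ hδ₁
  have hadm : ∀ᵐ z ∂μ, admissibleCode n k z := ae_iff.2 hsupp
  set A : ℝ := (2 * ((k + 1) * δ)) ^ (n - k) * (16 * (k + 1) ^ 2) with hA
  calc _ ≤ ∫⁻ x, ∫⁻ y, ENNReal.ofReal A * min 1 (ENNReal.ofReal δ / edist x y) ∂μ ∂μ :=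
        lintegral_mono_ae <| hadm.mono fun x hx => lintegral_mono_ae <|
          hadm.mono fun y hy => volume_inter_thickenings_le hx hy hδ₀
    _ ≤ ∫⁻ _, ENNReal.ofReal A * ENNReal.ofReal ((2 * C₀ * J + 1) * δ ^ s) ∂μ := by
        refine lintegral_mono fun x => ?_
        rw [lintegral_const_mul' _ _ ENNReal.ofReal_ne_top]
        gcongr
        exact lintegral_min_one_div_edist_le hC₀.le hs1 hfrostman x hδ₀ (by linarith) hJδ
    _ = ENNReal.ofReal (A * ((2 * C₀ * J + 1) * δ ^ s)) := by
        rw [lintegral_const, measure_univ, mul_one, ← ENNReal.ofReal_mul (by positivity)]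
    _ ≤ _ := by
        refine ENNReal.ofReal_le_ofReal ?_
        have hJC₀ : 2 * C₀ * J + 1 ≤ (2 * C₀ + 1) * (5 * Real.log (1 / δ)) := by
          nlinarith [(J.cast_nonneg : (0 : ℝ) ≤ J)]
        rw [Real.rpow_add hδ₀, ← Nat.cast_sub hkn.le, Real.rpow_natCast]
        calc A * ((2 * C₀ * J + 1) * δ ^ s)
            ≤ A * ((2 * C₀ + 1) * (5 * Real.log (1 / δ)) * δ ^ s) := by gcongr
          _ = _ := by simp only [hA, mul_pow]; ring

theorem double_integral_volume_inter_thickenings_le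
    (n k : ℕ) (hk : 1 ≤ k) (hkn : k < n) (s : ℝ) (hs0 : 0 < s) (hs1 : s ≤ 1)
    (C₀ : ℝ) (hC₀ : 0 < C₀)
    (μ : Measure ((Fin (n - k) → ℝ) × (Fin k → Fin (n - k) → ℝ)))
    [IsProbabilityMeasure μ]
    (hsupp : μ {x | ¬ admissibleCode n k x} = 0)
    (hfrostman : ∀ (x : (Fin (n - k) → ℝ) × (Fin k → Fin (n - k) → ℝ)) (r : ℝ),
      0 < r → μ (Metric.ball x r) ≤ ENNReal.ofReal (C₀ * r ^ s)) :
    ∃ C : ℝ, 0 < C ∧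
      ∀ δ : ℝ, 0 < δ → δ ≤ 1 / 2 →
        ∫⁻ x, ∫⁻ y,
            volume (Metric.thickening δ (affGraph n k x) ∩
              Metric.thickening δ (affGraph n k y) ∩ simplexCube n k) ∂μ ∂μ ≤
          ENNReal.ofReal (C * δ ^ ((n : ℝ) - k + s) * Real.log (1 / δ)) :=
  double_integral_volume_inter_thickenings_le_general n k hkn s hs1 C₀ hC₀ μ hsupp hfrostman
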